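/- arXiv:1009.1817 — 2 statements merged into one kernel-verified Lean document; each statement's English description precedes it below -/
import Mathlib

section
/- Let n ≥ 2, S = {s_1,...,s_n} the simple transpositions of S_{n+1}, and define h(t) = Σ_{A} ((n+1)!/|W_{A*}|)(t-1)^{|A|}, where the sum is over all A ⊆ S such that no connected component of A is contained in {s_n}, and A* = A ∪ {s ∈ {s_n} : s commutes with all t ∈ A}. Then h(t) = E_{n+1}(t) - C(n+1,2)·t·E_{n-1}(t). -/
open Polynomial Finset

/-- Number of descents of a permutation of `Fin m`. -/
noncomputable def des {m : ℕ} (σ : Equiv.Perm (Fin m)) : ℕ :=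
  Nat.card {i : Fin m // ∃ h : (i : ℕ) + 1 < m, σ ⟨(i : ℕ) + 1, h⟩ < σ i}

/-- The `m`-th Eulerian polynomial `∑_{σ ∈ S_m} t^{des σ}` (over `ℚ`). -/
noncomputable def Euler (m : ℕ) : Polynomial ℚ :=
  ∑ σ : Equiv.Perm (Fin m), X ^ des σ

/-- The simple transposition `s_{i+1} = (i+1, i+2)` in `S_{n+1}`. -/
def sT {n : ℕ} (i : Fin n) : Equiv.Perm (Fin (n + 1)) :=
  Equiv.swap i.castSucc i.succ

/-- The standard parabolic subgroup of `S_{n+1}` generated by a set of simple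
transpositions (indexed by `A ⊆ Fin n`). -/
def Wsub {n : ℕ} (A : Finset (Fin n)) : Subgroup (Equiv.Perm (Fin (n + 1))) :=
  Subgroup.closure (sT '' (A : Set (Fin n)))

/-- `x` and `y` lie in the same connected component of `A` in the type `A_n`
Coxeter graph (path graph: `s_i ~ s_{i+1}`). -/
def sameComp {n : ℕ} (A : Finset (Fin n)) (x y : Fin n) : Prop :=
  Relation.ReflTransGen
    (fun a b => a ∈ A ∧ b ∈ A ∧ ((a : ℕ) + 1 = (b : ℕ) ∨ (b : ℕ) + 1 = (a : ℕ))) x y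

/-- No connected component of `A` is contained entirely in `J`. -/
def noCompIn {n : ℕ} (A J : Finset (Fin n)) : Prop :=
  ∀ a ∈ A, ∃ b ∈ A, b ∉ J ∧ sameComp A a b

open scoped Classical in
/-- `A* = A ∪ {s ∈ J : s commutes with all t ∈ A}`. -/
noncomputable def Astar {n : ℕ} (A J : Finset (Fin n)) : Finset (Fin n) :=
  A ∪ J.filter (fun j => ∀ a ∈ A, Commute (sT j) (sT a))

/-!
Write `c(B) = (n+1)!/|W_B|`. Each left coset of `W_B` contains exactly one permutation with an
ascent at every position of `B`, so `c(B)` counts these permutations, and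
`∑_B c(B) (t-1)^|B| = ∑_σ ∑_{B ⊆ Asc σ} (t-1)^|B| = ∑_σ t^{asc σ} = E_{n+1}(t)`.

The sum defining `h(t)` agrees with this full sum on the sets containing `s_{n-1}`. The others are
`A'` and `A' ∪ {s_n}` with `A' ⊆ {s_1, …, s_{n-2}}`: the latter are excluded from `h`, and `A'`
enters `h` with weight `c(A'*) = c(A' ∪ {s_n}) = c(A')/2`, since `σ ↦ σ s_n` exchanges ascents and
descents at `n`. So the full sum minus `h(t)` is
`∑_{A'} c(A' ∪ {s_n}) ((t-1)^|A'| + (t-1)^{|A'|+1}) = t ∑_{A'} c(A' ∪ {s_n}) (t-1)^|A'|`,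
and `c(A' ∪ {s_n}) = C(n+1,2) · c_{S_{n-1}}(A')` makes this `C(n+1,2) t E_{n-1}(t)`.
-/

section Ascents

variable {M : ℕ}

def ascentSet (σ : Equiv.Perm (Fin (M + 1))) : Finset (Fin M) :=
  univ.filter fun i => σ i.castSucc < σ i.succ

@[simp]
lemma mem_ascentSet {σ : Equiv.Perm (Fin (M + 1))} {i : Fin M} :
    i ∈ ascentSet σ ↔ σ i.castSucc < σ i.succ := by
  simp [ascentSet]

lemma des_eq_card_filter (σ : Equiv.Perm (Fin (M + 1))) :
    des σ = #(univ.filter fun i : Fin M => σ i.succ < σ i.castSucc) := by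
  rw [des, Nat.card_eq_fintype_card, Fintype.card_subtype,
    ← card_map (s := univ.filter fun i : Fin M => σ i.succ < σ i.castSucc) Fin.castSuccEmb]
  refine congrArg card (ext fun i => ?_)
  induction i using Fin.lastCases with
  | last => simp
  | cast j => simp [Fin.succ]

lemma des_revPerm_mul (σ : Equiv.Perm (Fin (M + 1))) :
    des (Fin.revPerm * σ) = #(ascentSet σ) := by
  simp [des_eq_card_filter, ascentSet]

def ascentCount (A : Finset (Fin M)) : ℕ :=
  #(univ.filter fun σ : Equiv.Perm (Fin (M + 1)) => A ⊆ ascentSet σ)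

lemma sum_ascentCount_smul (M : ℕ) :
    ∑ A : Finset (Fin M), (ascentCount A : ℚ) • ((X : ℚ[X]) - 1) ^ #A = Euler (M + 1) := by
  have hcount (A : Finset (Fin M)) : (ascentCount A : ℚ) • ((X : ℚ[X]) - 1) ^ #A =
      ∑ σ : Equiv.Perm (Fin (M + 1)), if A ⊆ ascentSet σ then ((X : ℚ[X]) - 1) ^ #A else 0 := by
    rw [ascentCount, Nat.cast_smul_eq_nsmul, ← sum_const, sum_filter]
  have hsubsets (σ : Equiv.Perm (Fin (M + 1))) :
      ∑ A : Finset (Fin M), (if A ⊆ ascentSet σ then ((X : ℚ[X]) - 1) ^ #A else 0) =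
        X ^ #(ascentSet σ) := by
    have : univ.filter (· ⊆ ascentSet σ) = (ascentSet σ).powerset := by ext; simp
    rw [← sum_filter, this]
    simpa using sum_pow_mul_eq_add_pow ((X : ℚ[X]) - 1) 1 (ascentSet σ)
  simp_rw [hcount]
  rw [sum_comm, Euler]
  refine Fintype.sum_equiv (Equiv.mulLeft Fin.revPerm) _ _ fun σ => ?_
  rw [hsubsets, Equiv.coe_mulLeft, des_revPerm_mul]

end Ascents

section Parabolic

variable {M : ℕ}

lemma apply_le_castSucc_iff_of_mem_wsub {A : Finset (Fin M)} {ρ : Equiv.Perm (Fin (M + 1))}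
    (hρ : ρ ∈ Wsub A) {k : Fin M} (hk : k ∉ A) (x : Fin (M + 1)) :
    ρ x ≤ k.castSucc ↔ x ≤ k.castSucc := by
  refine Subgroup.closure_induction
    (p := fun ρ _ => ∀ x, ρ x ≤ k.castSucc ↔ x ≤ k.castSucc) ?_ ?_ ?_ ?_ hρ x
  · rintro _ ⟨a, ha, rfl⟩ x
    have hak : (a : ℕ) ≠ k := fun h => hk (Fin.ext h ▸ ha)
    simp only [sT, Equiv.swap_apply_def]
    split_ifs <;>
      simp only [Fin.le_def, Fin.ext_iff, Fin.val_castSucc, Fin.val_succ] at * <;> omega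
  · exact fun _ => Iff.rfl
  · intro _ _ _ _ hρ hτ x
    rw [Equiv.Perm.mul_apply, hρ, hτ]
  · intro ρ _ hρ x
    rw [← hρ]
    simp

lemma lt_of_forall_mem_ascentSet (σ : Equiv.Perm (Fin (M + 1))) {x y : Fin (M + 1)} (hxy : x < y)
    (h : ∀ k : Fin M, x ≤ k.castSucc → k.succ ≤ y → k ∈ ascentSet σ) : σ x < σ y := by
  induction y using Fin.induction with
  | zero => exact absurd hxy (Fin.not_lt_zero x)
  | succ j ih =>
    have hxj : x ≤ j.castSucc := Fin.le_castSucc_iff.2 hxy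
    have hj := mem_ascentSet.1 (h j hxj le_rfl)
    rcases hxj.lt_or_eq with hx | rfl
    · exact (ih hx fun k hxk hky => h k hxk (hky.trans Fin.castSucc_lt_succ.le)).trans hj
    · exact hj

/-- `ρ` preserves every initial segment cut off at a position outside `A`, and between two such
cuts it is increasing because `σ` and `σ * ρ` both are; so `ρ` is strictly monotone. -/
lemma eq_one_of_mem_wsub {A : Finset (Fin M)} {σ ρ : Equiv.Perm (Fin (M + 1))}
    (hσ : A ⊆ ascentSet σ) (hσρ : A ⊆ ascentSet (σ * ρ)) (hρ : ρ ∈ Wsub A) : ρ = 1 := by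
  have cut {k : Fin M} (hk : k ∉ A) := apply_le_castSucc_iff_of_mem_wsub hρ hk
  suffices hmono : StrictMono ρ from Equiv.ext fun x => hmono.apply_eq
  refine Fin.strictMono_iff_lt_succ.2 fun i => ?_
  by_cases hi : i ∈ A
  · by_contra hge
    have hlt : ρ i.succ < ρ i.castSucc :=
      (not_lt.1 hge).lt_of_ne (ρ.injective.ne (Fin.castSucc_lt_succ).ne')
    refine lt_asymm (mem_ascentSet.1 (hσρ hi)) (lt_of_forall_mem_ascentSet σ hlt ?_)
    intro k hk₁ hk₂
    by_contra hkσ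
    have hkA : k ∉ A := fun hkA => hkσ (hσ hkA)
    have h₁ := (cut hkA i.succ).1 hk₁
    have h₂ := mt (cut hkA i.castSucc).2 (not_le.2 (Fin.castSucc_lt_succ.trans_le hk₂))
    exact h₂ (Fin.castSucc_lt_succ.le.trans h₁)
  · exact ((cut hi i.castSucc).2 le_rfl).trans_lt
      (not_le.1 (mt (cut hi i.succ).1 (not_le.2 Fin.castSucc_lt_succ)))

lemma sum_mul_apply_lt_sum_mul_apply_mul_sT {σ : Equiv.Perm (Fin (M + 1))} {a : Fin M}
    (h : σ a.succ < σ a.castSucc) :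
    ∑ x : Fin (M + 1), ((x : ℕ) : ℤ) * (σ x : ℕ) <
      ∑ x : Fin (M + 1), ((x : ℕ) : ℤ) * ((σ * sT a) x : ℕ) := by
  rw [← Equiv.sum_comp (sT a) fun x : Fin (M + 1) => ((x : ℕ) : ℤ) * ((σ * sT a) x : ℕ),
    ← sub_pos, ← sum_sub_distrib]
  simp only [Equiv.Perm.mul_apply, sT, Equiv.swap_apply_self]
  rw [Fintype.sum_eq_add a.castSucc a.succ Fin.castSucc_lt_succ.ne fun x hx => by
    rw [Equiv.swap_apply_of_ne_of_ne hx.1 hx.2, sub_self]]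
  simp only [Equiv.swap_apply_left, Equiv.swap_apply_right, Fin.val_castSucc, Fin.val_succ]
  have : ((σ a.succ : ℕ) : ℤ) < σ a.castSucc := by exact_mod_cast h
  push_cast
  linarith

/-- A maximiser of `∑ x, x * (π * τ) x` over `τ ∈ Wsub A` works: a descent of `π * τ` at some
`a ∈ A` would be removed by `sT a`, increasing the sum. -/
lemma exists_mem_wsub_subset_ascentSet (A : Finset (Fin M)) (π : Equiv.Perm (Fin (M + 1))) :
    ∃ τ ∈ Wsub A, A ⊆ ascentSet (π * τ) := by
  classical
  obtain ⟨τ, -, hτ⟩ := exists_max_image (univ : Finset (Wsub A))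
    (fun τ => ∑ x : Fin (M + 1), ((x : ℕ) : ℤ) * ((π * τ) x : ℕ)) univ_nonempty
  refine ⟨τ, τ.2, fun a ha => ?_⟩
  by_contra hasc
  have hdes : (π * τ) a.succ < (π * τ) a.castSucc :=
    (not_lt.1 (mt mem_ascentSet.2 hasc)).lt_of_ne ((π * τ).injective.ne Fin.castSucc_lt_succ.ne')
  have hmem : (τ : Equiv.Perm (Fin (M + 1))) * sT a ∈ Wsub A :=
    mul_mem τ.2 (Subgroup.subset_closure ⟨a, ha, rfl⟩)
  have := hτ ⟨_, hmem⟩ (mem_univ _)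
  rw [← mul_assoc] at this
  exact (sum_mul_apply_lt_sum_mul_apply_mul_sT hdes).not_ge this

lemma ascentCount_mul_card_wsub (A : Finset (Fin M)) :
    ascentCount A * Nat.card (Wsub A) = (M + 1).factorial := by
  have hbij : Function.Bijective
      fun p : {σ : Equiv.Perm (Fin (M + 1)) // A ⊆ ascentSet σ} × Wsub A => p.1.1 * p.2.1 := by
    constructor
    · rintro ⟨⟨σ, hσ⟩, ⟨τ, hτ⟩⟩ ⟨⟨σ', hσ'⟩, ⟨τ', hτ'⟩⟩ (e : σ * τ = σ' * τ')
      have hσ'' : σ * (τ * τ'⁻¹) = σ' := by rw [← mul_assoc, e, mul_inv_cancel_right]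
      have hone := eq_one_of_mem_wsub hσ (hσ'' ▸ hσ') (mul_mem hτ (inv_mem hτ'))
      rw [mul_inv_eq_one] at hone
      subst hone
      simp_all
    · intro π
      obtain ⟨τ, hτ, hπτ⟩ := exists_mem_wsub_subset_ascentSet A π
      exact ⟨⟨⟨π * τ, hπτ⟩, ⟨τ⁻¹, inv_mem hτ⟩⟩, by simp⟩
  have hperm : Nat.card (Equiv.Perm (Fin (M + 1))) = (M + 1).factorial := by
    rw [Nat.card_perm, Nat.card_eq_fintype_card, Fintype.card_fin]
  rw [← hperm, ← Nat.card_eq_of_bijective _ hbij, Nat.card_prod, ascentCount,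
    ← Fintype.card_subtype, ← Nat.card_eq_fintype_card]

lemma ascentCount_eq_factorial_div (A : Finset (Fin M)) :
    (ascentCount A : ℚ) = (M + 1).factorial / Nat.card (Wsub A) := by
  rw [eq_div_iff (Nat.cast_ne_zero.2 Nat.card_pos.ne'), ← Nat.cast_mul,
    ascentCount_mul_card_wsub]

end Parabolic

section Transpositions

variable {M : ℕ}

lemma sT_apply_of_far {i a : Fin M} (h : a.val + 1 < i.val ∨ i.val + 1 < a.val) :
    sT i a.castSucc = a.castSucc ∧ sT i a.succ = a.succ := by
  constructor <;>
  · refine Equiv.swap_apply_of_ne_of_ne ?_ ?_ <;>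
    · simp only [ne_eq, Fin.ext_iff, Fin.val_castSucc, Fin.val_succ]
      omega

lemma commute_sT_of_far {i j : Fin M} (h : i.val + 1 < j.val ∨ j.val + 1 < i.val) :
    Commute (sT i) (sT j) :=
  (Equiv.Perm.disjoint_swap_swap (by simp [Fin.ext_iff]; omega)).commute

lemma not_commute_sT_castSucc_sT_succ (i : Fin M) :
    ¬ Commute (sT i.castSucc) (sT i.succ) := by
  intro h
  have h₀ : sT i.succ i.castSucc.castSucc = i.castSucc.castSucc := by
    refine Equiv.swap_apply_of_ne_of_ne ?_ ?_ <;>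
    · simp only [ne_eq, Fin.ext_iff, Fin.val_castSucc, Fin.val_succ]
      omega
  have h₁ : sT i.castSucc i.castSucc.castSucc = i.succ.castSucc := Equiv.swap_apply_left _ _
  have h₂ : sT i.succ i.succ.castSucc = i.succ.succ := Equiv.swap_apply_left _ _
  have := congrArg Fin.val (DFunLike.congr_fun h.eq i.castSucc.castSucc)
  simp only [Equiv.Perm.mul_apply, h₀, h₁, h₂, Fin.val_castSucc, Fin.val_succ] at this
  omega

lemma mem_ascentSet_mul_sT_iff (σ : Equiv.Perm (Fin (M + 1))) (i : Fin M) :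
    i ∈ ascentSet (σ * sT i) ↔ i ∉ ascentSet σ := by
  simp only [mem_ascentSet, Equiv.Perm.mul_apply, sT, Equiv.swap_apply_left,
    Equiv.swap_apply_right, not_lt]
  exact ⟨le_of_lt, fun h => h.lt_of_ne (σ.injective.ne Fin.castSucc_lt_succ.ne')⟩

/-- Right multiplication by `sT i` exchanges ascents and descents at `i`, keeping those at
positions not adjacent to `i`. -/
lemma ascentCount_eq_two_mul_ascentCount_insert {A : Finset (Fin M)} {i : Fin M}
    (hA : ∀ a ∈ A, a.val + 1 < i.val ∨ i.val + 1 < a.val) :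
    ascentCount A = 2 * ascentCount (insert i A) := by
  have hkeep (σ : Equiv.Perm (Fin (M + 1))) : A ⊆ ascentSet (σ * sT i) ↔ A ⊆ ascentSet σ := by
    refine forall₂_congr fun a ha => ?_
    simp only [mem_ascentSet, Equiv.Perm.mul_apply, sT_apply_of_far (hA a ha)]
  rw [ascentCount, ascentCount, two_mul,
    ← card_filter_add_card_filter_not (p := fun σ => i ∈ ascentSet σ), filter_filter,
    filter_filter]
  have hins : (fun σ : Equiv.Perm (Fin (M + 1)) => A ⊆ ascentSet σ ∧ i ∈ ascentSet σ) =
      fun σ => insert i A ⊆ ascentSet σ := by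
    ext σ
    rw [insert_subset_iff, and_comm]
  simp only [hins]
  congr 1
  refine card_equiv (Equiv.mulRight (sT i)) fun σ => ?_
  simp only [mem_filter, mem_univ, true_and, Equiv.coe_mulRight, insert_subset_iff,
    mem_ascentSet_mul_sT_iff, hkeep, and_comm]

lemma viaEmbedding_swap {α β : Type*} [DecidableEq α] [DecidableEq β] (ι : α ↪ β) (x y : α) :
    (Equiv.swap x y).viaEmbedding ι = Equiv.swap (ι x) (ι y) := by
  ext z
  by_cases hz : z ∈ Set.range ι
  · obtain ⟨w, rfl⟩ := hz
    rw [Equiv.Perm.viaEmbedding_apply, ι.injective.map_swap]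
  · rw [Equiv.Perm.viaEmbedding_apply_of_notMem _ _ _ hz, Equiv.swap_apply_of_ne_of_ne
      (by rintro rfl; exact hz ⟨x, rfl⟩) (by rintro rfl; exact hz ⟨y, rfl⟩)]

lemma card_wsub_map_castSucc (A : Finset (Fin M)) :
    Nat.card (Wsub (A.map Fin.castSuccEmb)) = Nat.card (Wsub A) := by
  have hmap : (Wsub A).map (Equiv.Perm.viaEmbeddingHom Fin.castSuccEmb) =
      Wsub (A.map Fin.castSuccEmb) := by
    rw [Wsub, MonoidHom.map_closure, Wsub, Set.image_image, coe_map, Set.image_image]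
    congr 1
    refine Set.image_congr fun a _ => ?_
    rw [Equiv.Perm.viaEmbeddingHom_apply, sT, viaEmbedding_swap, sT]
    rfl
  rw [← hmap, Subgroup.card_map_of_injective (Equiv.Perm.viaEmbeddingHom_injective _)]

lemma ascentCount_map_castSucc (A : Finset (Fin M)) :
    ascentCount (A.map Fin.castSuccEmb) = (M + 2) * ascentCount A := by
  refine Nat.eq_of_mul_eq_mul_right (Nat.card_pos (α := Wsub A)) ?_
  rw [← card_wsub_map_castSucc, ascentCount_mul_card_wsub, card_wsub_map_castSucc, mul_assoc,
    ascentCount_mul_card_wsub, Nat.factorial_succ]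

end Transpositions

lemma sum_finset_fin_succ {β : Type*} [AddCommMonoid β] {k : ℕ} (f : Finset (Fin (k + 1)) → β) :
    ∑ A, f A = ∑ A : Finset (Fin k),
      (f (A.map Fin.castSuccEmb) + f (insert (Fin.last k) (A.map Fin.castSuccEmb))) := by
  have hpow : (univ.map Fin.castSuccEmb).powerset =
      univ.map ⟨fun A : Finset (Fin k) => A.map Fin.castSuccEmb, map_injective _⟩ := by
    ext B
    simp [subset_map_iff, eq_comm]
  rw [← powerset_univ, Fin.univ_castSuccEmb, cons_eq_insert, sum_powerset_insert (by simp),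
    ← sum_add_distrib, hpow, sum_map]
  rfl

section LastGenerator

variable {M : ℕ}

lemma noCompIn_of_forall_notMem {A J : Finset (Fin M)} (h : ∀ a ∈ A, a ∉ J) : noCompIn A J :=
  fun a ha => ⟨a, ha, h a ha, .refl⟩

lemma noCompIn_last_of_mem {A : Finset (Fin (M + 2))} (hk : (Fin.last M).castSucc ∈ A) :
    noCompIn A {Fin.last (M + 1)} := by
  intro a ha
  by_cases hal : a = Fin.last (M + 1)
  · subst hal
    refine ⟨_, hk, by simp [Fin.ext_iff], .single ⟨ha, hk, Or.inr ?_⟩⟩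
    simp
  · exact ⟨a, ha, by simpa using hal, .refl⟩

lemma not_noCompIn_insert_last {A : Finset (Fin (M + 2))} (hk : (Fin.last M).castSucc ∉ A) :
    ¬ noCompIn (insert (Fin.last (M + 1)) A) {Fin.last (M + 1)} := by
  intro h
  obtain ⟨b, -, hb, hcomp⟩ := h _ (mem_insert_self _ _)
  refine hb (mem_singleton.2 ?_)
  clear hb
  induction hcomp with
  | refl => rfl
  | @tail _ c _ hstep ih =>
    obtain ⟨-, hc, hadj⟩ := hstep
    subst ih
    rcases hadj with hadj | hadj
    · exact absurd c.isLt (by simp at hadj; omega)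
    · have hck : c = (Fin.last M).castSucc := Fin.ext (by simp at hadj ⊢; omega)
      subst hck
      exact absurd ((mem_insert.1 hc).resolve_left (by simp [Fin.ext_iff])) hk

lemma astar_last_of_mem {A : Finset (Fin (M + 2))} (hk : (Fin.last M).castSucc ∈ A) :
    Astar A {Fin.last (M + 1)} = A := by
  rw [Astar, filter_singleton, if_neg, union_empty]
  intro h
  refine not_commute_sT_castSucc_sT_succ (Fin.last M) ?_
  rw [Fin.succ_last]
  exact (h _ hk).symm

lemma astar_last_of_lt {A : Finset (Fin (M + 2))} (hA : ∀ a ∈ A, a.val < M) :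
    Astar A {Fin.last (M + 1)} = insert (Fin.last (M + 1)) A := by
  rw [Astar, filter_singleton, if_pos, union_comm, ← insert_eq]
  exact fun a ha => commute_sT_of_far (Or.inr (by simp; linarith [hA a ha]))

lemma ascentCount_map_map_eq_two_mul (A : Finset (Fin M)) :
    ascentCount ((A.map Fin.castSuccEmb).map Fin.castSuccEmb) =
      2 * ascentCount (insert (Fin.last (M + 1))
        ((A.map Fin.castSuccEmb).map Fin.castSuccEmb)) := by
  have hA : ∀ a ∈ (A.map Fin.castSuccEmb).map Fin.castSuccEmb, a.val < M := by simp
  exact ascentCount_eq_two_mul_ascentCount_insert fun a ha => Or.inl (by simp; linarith [hA a ha])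

lemma ascentCount_insert_last_map_map (A : Finset (Fin M)) :
    (ascentCount (insert (Fin.last (M + 1)) ((A.map Fin.castSuccEmb).map Fin.castSuccEmb)) : ℚ) =
      (M + 3).choose 2 * ascentCount A := by
  have h := ascentCount_map_map_eq_two_mul A
  rw [ascentCount_map_castSucc, ascentCount_map_castSucc] at h
  qify at h
  rw [Nat.cast_choose_two]
  push_cast
  linarith

end LastGenerator

open scoped Classical in
lemma sum_ite_noCompIn_last (m : ℕ) :
    ∑ A : Finset (Fin (m + 2)), (if noCompIn A {Fin.last (m + 1)} then
        (ascentCount (Astar A {Fin.last (m + 1)}) : ℚ) • ((X : ℚ[X]) - 1) ^ #A else 0) =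
      Euler (m + 3) - ((m + 3).choose 2 : ℚ) • (X * Euler (m + 1)) := by
  have hE := sum_ascentCount_smul (m + 2)
  rw [sum_finset_fin_succ, sum_finset_fin_succ] at hE
  rw [sum_finset_fin_succ, sum_finset_fin_succ, ← hE, ← sum_ascentCount_smul m, mul_sum,
    smul_sum, ← sum_sub_distrib]
  refine sum_congr rfl fun A _ => ?_
  simp only [map_insert, Fin.coe_castSuccEmb]
  set B := (A.map Fin.castSuccEmb).map Fin.castSuccEmb
  have hB : ∀ a ∈ B, a.val < m := by simp [B]
  have hkB : (Fin.last m).castSucc ∉ B := fun h => by simpa using hB _ h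
  have hlB : Fin.last (m + 1) ∉ B := fun h => by simpa using hB _ h
  have hlkB : Fin.last (m + 1) ∉ insert (Fin.last m).castSucc B := by
    simp [hlB, Fin.ext_iff]
  have hcard : #B = #A := by simp [B]
  rw [if_pos (noCompIn_of_forall_notMem fun a ha => by simp [Fin.ext_iff]; linarith [hB a ha]),
    if_neg (not_noCompIn_insert_last hkB),
    if_pos (noCompIn_last_of_mem (mem_insert_self _ _)),
    if_pos (noCompIn_last_of_mem (mem_insert_of_mem (mem_insert_self _ _))),
    astar_last_of_lt hB,
    astar_last_of_mem (mem_insert_self _ _),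
    astar_last_of_mem (mem_insert_of_mem (mem_insert_self _ _)),
    card_insert_of_notMem hlB, card_insert_of_notMem hkB, card_insert_of_notMem hlkB,
    card_insert_of_notMem hkB, hcard, ascentCount_map_map_eq_two_mul, Nat.cast_mul,
    ascentCount_insert_last_map_map]
  simp only [smul_eq_C_mul, map_mul, Nat.cast_ofNat, map_ofNat]
  ring

open scoped Classical in
theorem hpoly_J_sn (n : ℕ) (hn : 2 ≤ n) :
    ∑ A ∈ Finset.univ.filter (fun A : Finset (Fin n) =>
        noCompIn A {⟨n - 1, by omega⟩}),
      (((n + 1).factorial : ℚ) /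
          (Nat.card ↥(Wsub (Astar A {⟨n - 1, by omega⟩})) : ℚ)) • (X - 1) ^ A.card
      = Euler (n + 1) - ((n + 1).choose 2 : ℚ) • (X * Euler (n - 1)) := by
  obtain ⟨m, rfl⟩ : ∃ m, n = m + 2 := ⟨n - 2, by omega⟩
  simp only [← ascentCount_eq_factorial_div]
  rw [sum_filter]
  exact sum_ite_noCompIn_last m
end

section
/- For n ≥ 2, Σ_{A ⊆ S, s_{n-1} ∉ A} ((n+1)!/|W_A|)(t-1)^{|A|} = (n(n+1)/2)(t+1) E_{n-1}(t), where S = {s_1,...,s_n} are the simple transpositions of S_{n+1}. -/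
open Polynomial Finset

/-
The parabolic subgroup `W_B` is the Young subgroup of the permutations preserving the blocks of
consecutive positions joined by the transpositions in `B` (bubble sort inside the blocks shows
that they generate it). Sorting every block of `σ` into decreasing order factors `σ` uniquely as
`u * w` with `w ∈ W_B` and `B ⊆ Des u`, so `(n+1)! / |W_B|` counts the permutations whose descent
set contains `B`, and summing `(t - 1)^|B|` over `B ⊆ Des σ ∩ C` gives `t^|Des σ ∩ C|`.
For `C = S \ {s_{n-1}}`, a permutation of `S_{n+1}` is determined by its last two values and the
standardization of its first `n - 1` values; its descents in `C` are those of the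
standardization plus possibly one at the last position, and exactly half of the `n (n + 1)`
pairs of last values produce that one.
-/

open Equiv

section Young

variable {m : ℕ}

/-- Edge `i : Fin m` joins the positions `i` and `i + 1` of `Fin (m + 1)`. The blocks of `B` are
the maximal runs of positions joined by edges of `B`; `blockIndex B` numbers them from left to
right. -/
def blockIndex (B : Finset (Fin m)) (x : Fin (m + 1)) : ℕ :=
  #{j ∈ Bᶜ | j.castSucc < x}

lemma blockIndex_mono (B : Finset (Fin m)) : Monotone (blockIndex B) :=
  fun _ _ hxy => card_le_card (monotone_filter_right _ fun _ _ hj => hj.trans_le hxy)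

lemma blockIndex_succ (B : Finset (Fin m)) (i : Fin m) :
    blockIndex B i.succ = blockIndex B i.castSucc + if i ∈ B then 0 else 1 := by
  simp only [blockIndex, Fin.castSucc_lt_succ_iff, Fin.castSucc_lt_castSucc_iff, le_iff_lt_or_eq,
    filter_or]
  rw [card_union_of_disjoint (disjoint_filter.mpr fun _ _ h => h.ne), filter_eq']
  split_ifs <;> simp_all

def youngSubgroup (B : Finset (Fin m)) : Subgroup (Perm (Fin (m + 1))) where
  carrier := {σ | ∀ x, blockIndex B (σ x) = blockIndex B x}
  one_mem' _ := rfl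
  mul_mem' hσ hτ x := (hσ _).trans (hτ x)
  inv_mem' {σ} hσ x := by simpa using (hσ (σ⁻¹ x)).symm

lemma sT_mem_youngSubgroup {B : Finset (Fin m)} {i : Fin m} (hi : i ∈ B) :
    sT i ∈ youngSubgroup B := by
  have hblock : blockIndex B i.succ = blockIndex B i.castSucc := by simp [blockIndex_succ, hi]
  intro x
  rcases eq_or_ne x i.castSucc with rfl | h₁
  · simp [sT, hblock]
  rcases eq_or_ne x i.succ with rfl | h₂
  · simp [sT, hblock]
  · rw [sT, swap_apply_of_ne_of_ne h₁ h₂]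

lemma mem_of_descent_of_mem_youngSubgroup {B : Finset (Fin m)} {σ : Perm (Fin (m + 1))}
    (hσ : σ ∈ youngSubgroup B) {i : Fin m} (hi : σ i.succ < σ i.castSucc) : i ∈ B := by
  by_contra hiB
  have : blockIndex B (σ i.castSucc) < blockIndex B (σ i.succ) := by
    rw [hσ, hσ, blockIndex_succ, if_neg hiB]
    omega
  exact (blockIndex_mono B).reflect_lt this |>.not_gt hi

def inversions {n : ℕ} (σ : Perm (Fin n)) : Finset (Fin n × Fin n) :=
  {p | p.1 < p.2 ∧ σ p.2 < σ p.1}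

lemma mem_inversions {n : ℕ} {σ : Perm (Fin n)} {p : Fin n × Fin n} :
    p ∈ inversions σ ↔ p.1 < p.2 ∧ σ p.2 < σ p.1 := by
  simp [inversions]

lemma sT_lt_sT {i : Fin m} {p q : Fin (m + 1)} (hpq : p < q)
    (hne : (p, q) ≠ (i.castSucc, i.succ)) : sT i p < sT i q := by
  simp only [sT, swap_apply_def]
  split_ifs <;> grind

lemma card_inversions_mul_sT_lt {σ : Perm (Fin (m + 1))} {i : Fin m}
    (hi : σ i.succ < σ i.castSucc) : #(inversions (σ * sT i)) < #(inversions σ) := by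
  have hmem : (i.castSucc, i.succ) ∈ inversions σ :=
    mem_inversions.mpr ⟨Fin.castSucc_lt_succ, hi⟩
  calc #(inversions (σ * sT i)) ≤ #((inversions σ).erase (i.castSucc, i.succ)) := by
        refine card_le_card_of_injOn (Prod.map (sT i) (sT i)) ?_ ?_
        · rintro ⟨p, q⟩ hpq
          rw [mem_coe, mem_inversions] at hpq
          have hne : (p, q) ≠ (i.castSucc, i.succ) := by
            rintro ⟨⟩
            simp [sT] at hpq
            exact hpq.not_gt hi
          rw [mem_coe, mem_erase, mem_inversions]
          refine ⟨?_, sT_lt_sT hpq.1 hne, hpq.2⟩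
          rintro h
          simp only [Prod.map, Prod.mk.injEq, sT, swap_apply_eq_iff, swap_apply_left,
            swap_apply_right] at h
          exact Fin.castSucc_lt_succ.not_gt (h.1 ▸ h.2 ▸ hpq.1)
        · exact (Prod.map_injective.mpr ⟨(sT i).injective, (sT i).injective⟩).injOn
    _ < #(inversions σ) := card_erase_lt_of_mem hmem

lemma mem_Wsub_of_mem_youngSubgroup {B : Finset (Fin m)} {σ : Perm (Fin (m + 1))}
    (hσ : σ ∈ youngSubgroup B) : σ ∈ Wsub B := by
  by_cases hdes : ∃ i : Fin m, σ i.succ < σ i.castSucc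
  · obtain ⟨i, hi⟩ := hdes
    have hiB := mem_of_descent_of_mem_youngSubgroup hσ hi
    have hσs : σ * sT i ∈ Wsub B :=
      mem_Wsub_of_mem_youngSubgroup (mul_mem hσ (sT_mem_youngSubgroup hiB))
    simpa [sT, mul_assoc] using mul_mem hσs (Subgroup.subset_closure ⟨i, hiB, rfl⟩)
  · have hmono : StrictMono σ := Fin.strictMono_iff_lt_succ.mpr fun i =>
      (not_lt.mp (not_exists.mp hdes i)).lt_of_ne (σ.injective.ne Fin.castSucc_lt_succ.ne)
    rw [show σ = 1 from DFunLike.coe_injective hmono.eq_id]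
    exact one_mem _
termination_by #(inversions σ)
decreasing_by exact card_inversions_mul_sT_lt hi

lemma Wsub_eq_youngSubgroup (B : Finset (Fin m)) : Wsub B = youngSubgroup B := by
  refine le_antisymm ?_ fun _ => mem_Wsub_of_mem_youngSubgroup
  rw [Wsub, Subgroup.closure_le]
  rintro _ ⟨i, hi, rfl⟩
  exact sT_mem_youngSubgroup hi

def descents (σ : Perm (Fin (m + 1))) : Finset (Fin m) :=
  {i | σ i.succ < σ i.castSucc}

lemma des_eq_card_descents {k : ℕ} (τ : Perm (Fin (k + 1))) : des τ = #(descents τ) := by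
  rw [des, Nat.card_eq_fintype_card, Fintype.card_subtype,
    ← card_map (s := descents τ) Fin.castSuccEmb]
  refine congrArg card (Finset.ext fun i => ?_)
  induction i using Fin.lastCases with
  | last => simp [descents]
  | cast j => simp [descents, ← Fin.succ_mk]

def permsWithDescents (B : Finset (Fin m)) : Finset (Perm (Fin (m + 1))) :=
  {σ | B ⊆ descents σ}

lemma mem_permsWithDescents {B : Finset (Fin m)} {σ : Perm (Fin (m + 1))} :
    σ ∈ permsWithDescents B ↔ B ⊆ descents σ := by
  simp [permsWithDescents]

def sortKey (B : Finset (Fin m)) (σ : Perm (Fin (m + 1))) (x : Fin (m + 1)) :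
    ℕ ×ₗ (Fin (m + 1))ᵒᵈ :=
  toLex (blockIndex B x, OrderDual.toDual (σ x))

lemma sortKey_injective (B : Finset (Fin m)) (σ : Perm (Fin (m + 1))) :
    Function.Injective (sortKey B σ) :=
  fun _ _ h => σ.injective (congrArg (fun k => OrderDual.ofDual (ofLex k).2) h)

lemma monotone_sortKey_iff {B : Finset (Fin m)} {σ : Perm (Fin (m + 1))} :
    Monotone (sortKey B σ) ↔ B ⊆ descents σ := by
  rw [Fin.monotone_iff_le_succ]
  refine forall_congr' fun i => ?_
  by_cases hi : i ∈ B
  · simp only [sortKey, descents, blockIndex_succ, hi, Prod.Lex.toLex_le_toLex]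
    simpa using (σ.injective.ne Fin.castSucc_lt_succ.ne').le_iff_lt
  · simp [sortKey, blockIndex_succ, hi, Prod.Lex.toLex_le_toLex]

lemma sortKey_comp {B : Finset (Fin m)} (σ : Perm (Fin (m + 1))) {w : Perm (Fin (m + 1))}
    (hw : w ∈ youngSubgroup B) : sortKey B σ ∘ w = sortKey B (σ * w) := by
  ext1 x
  simp [sortKey, hw x]

lemma sort_sortKey_mem_youngSubgroup (B : Finset (Fin m)) (σ : Perm (Fin (m + 1))) :
    Tuple.sort (sortKey B σ) ∈ youngSubgroup B := by
  have hsorted : Monotone (blockIndex B ∘ Tuple.sort (sortKey B σ)) :=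
    Prod.Lex.monotone_fst_ofLex.comp (Tuple.monotone_sort (sortKey B σ))
  intro x
  exact congrFun (Tuple.unique_monotone (τ := 1) hsorted (blockIndex_mono B)) x

noncomputable def youngFactorization (B : Finset (Fin m)) :
    permsWithDescents B × youngSubgroup B ≃ Perm (Fin (m + 1)) :=
  Equiv.ofBijective (fun p => p.1.1 * p.2.1) <| by
    constructor
    · rintro ⟨⟨u, hu⟩, ⟨w, hw⟩⟩ ⟨⟨u', hu'⟩, ⟨w', hw'⟩⟩ (h : u * w = u' * w')
      have key_eq {v w : Perm (Fin (m + 1))} (hw : w ∈ youngSubgroup B) :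
          sortKey B (v * w) ∘ ⇑w⁻¹ = sortKey B v := by
        rw [sortKey_comp _ (inv_mem hw), mul_inv_cancel_right]
      have hinv : (⇑w⁻¹ : Fin (m + 1) → Fin (m + 1)) = ⇑w'⁻¹ :=
        (sortKey_injective B (u * w)).comp_left <| Tuple.unique_monotone
          (by rw [key_eq hw]; exact monotone_sortKey_iff.mpr (mem_permsWithDescents.mp hu))
          (by rw [h, key_eq hw']; exact monotone_sortKey_iff.mpr (mem_permsWithDescents.mp hu'))
      obtain rfl : w = w' := inv_injective (DFunLike.coe_injective hinv)
      obtain rfl : u = u' := mul_right_cancel h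
      rfl
    · intro σ
      set τ := Tuple.sort (sortKey B σ)
      have hτ : τ ∈ youngSubgroup B := sort_sortKey_mem_youngSubgroup B σ
      refine ⟨⟨⟨σ * τ, ?_⟩, ⟨τ⁻¹, inv_mem hτ⟩⟩, by simp⟩
      rw [mem_permsWithDescents, ← monotone_sortKey_iff, ← sortKey_comp σ hτ]
      exact Tuple.monotone_sort (sortKey B σ)

lemma card_permsWithDescents_mul_card_youngSubgroup (B : Finset (Fin m)) :
    #(permsWithDescents B) * Nat.card (youngSubgroup B) = (m + 1).factorial := by
  rw [← Nat.card_eq_finsetCard, ← Nat.card_prod, Nat.card_congr (youngFactorization B),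
    Nat.card_perm, Nat.card_fin]

lemma factorial_div_card_Wsub (B : Finset (Fin m)) :
    ((m + 1).factorial : ℚ) / Nat.card (Wsub B) = #(permsWithDescents B) := by
  rw [Wsub_eq_youngSubgroup, ← card_permsWithDescents_mul_card_youngSubgroup, Nat.cast_mul,
    mul_div_cancel_right₀ _ (Nat.cast_ne_zero.mpr Nat.card_pos.ne')]

lemma sum_powerset_factorial_div_card_Wsub (C : Finset (Fin m)) :
    ∑ B ∈ C.powerset, (((m + 1).factorial : ℚ) / Nat.card (Wsub B)) • (X - 1 : ℚ[X]) ^ #B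
      = ∑ σ : Perm (Fin (m + 1)), X ^ #(descents σ ∩ C) := by
  simp_rw [factorial_div_card_Wsub, Nat.cast_smul_eq_nsmul, ← sum_const, permsWithDescents,
    sum_filter]
  rw [sum_comm]
  refine sum_congr rfl fun σ _ => ?_
  rw [← sum_filter]
  have : {B ∈ C.powerset | B ⊆ descents σ} = (descents σ ∩ C).powerset := by
    ext B
    simp only [mem_filter, mem_powerset, subset_inter_iff, and_comm]
  rw [this]
  convert sum_pow_mul_eq_add_pow (X - 1 : ℚ[X]) 1 (descents σ ∩ C) using 1 <;> simp

end Young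

noncomputable def permSnoc {n : ℕ} (b : Fin (n + 1)) (τ : Perm (Fin n)) : Perm (Fin (n + 1)) :=
  Equiv.ofBijective (Fin.snoc (α := fun _ => Fin (n + 1)) (b.succAbove ∘ τ) b) <|
    Finite.injective_iff_bijective.mp <|
      Fin.snoc_injective_of_injective (Fin.succAbove_right_injective.comp τ.injective)
        fun ⟨i, hi⟩ => Fin.succAbove_ne b (τ i) hi

@[simp]
lemma permSnoc_last {n : ℕ} (b : Fin (n + 1)) (τ : Perm (Fin n)) :
    permSnoc b τ (Fin.last n) = b := by
  simp [permSnoc]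

@[simp]
lemma permSnoc_castSucc {n : ℕ} (b : Fin (n + 1)) (τ : Perm (Fin n)) (i : Fin n) :
    permSnoc b τ i.castSucc = b.succAbove (τ i) := by
  simp [permSnoc]

noncomputable def permSnocEquiv (n : ℕ) : Fin (n + 1) × Perm (Fin n) ≃ Perm (Fin (n + 1)) :=
  Equiv.ofBijective (fun p => permSnoc p.1 p.2) <| by
    refine (Fintype.bijective_iff_injective_and_card _).mpr
      ⟨?_, by simp [Fintype.card_perm, Nat.factorial_succ]⟩
    rintro ⟨b, τ⟩ ⟨b', τ'⟩ h
    obtain rfl : b = b' := by simpa using DFunLike.congr_fun h (Fin.last n)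
    obtain rfl : τ = τ' := Equiv.ext fun i => by simpa using DFunLike.congr_fun h i.castSucc
    rfl

@[simp]
lemma castSucc_mem_descents_permSnoc {k : ℕ} (b : Fin (k + 2)) (τ : Perm (Fin (k + 1)))
    (i : Fin k) : i.castSucc ∈ descents (permSnoc b τ) ↔ i ∈ descents τ := by
  simp only [descents, mem_filter, mem_univ, true_and, Fin.succ_castSucc, permSnoc_castSucc,
    Fin.succAbove_lt_succAbove_iff]

@[simp]
lemma last_mem_descents_permSnoc {k : ℕ} (b : Fin (k + 2)) (τ : Perm (Fin (k + 1))) :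
    Fin.last k ∈ descents (permSnoc b τ) ↔ b ≤ (τ (Fin.last k)).castSucc := by
  simp [descents, Fin.lt_succAbove_iff_le_castSucc]

lemma card_descents_permSnoc_permSnoc_inter {r : ℕ} (b : Fin (r + 3)) (a : Fin (r + 2))
    (τ : Perm (Fin (r + 1))) :
    #(descents (permSnoc b (permSnoc a τ)) ∩ {(Fin.last r).castSucc}ᶜ)
      = #(descents τ) + if b ≤ a.castSucc then 1 else 0 := by
  have hcard {j : ℕ} (s : Finset (Fin j)) : #s = ∑ i, if i ∈ s then 1 else 0 := by simp
  rw [hcard, hcard, Fin.sum_univ_castSucc, Fin.sum_univ_castSucc]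
  simp [(Fin.castSucc_lt_last _).ne']

lemma sum_pow_card_descents_inter_compl (r : ℕ) :
    ∑ σ : Perm (Fin (r + 3)), (X : ℚ[X]) ^ #(descents σ ∩ {(Fin.last r).castSucc}ᶜ)
      = (∑ b : Fin (r + 3), ∑ a : Fin (r + 2), (X : ℚ[X]) ^ (if b ≤ a.castSucc then 1 else 0))
        * ∑ τ : Perm (Fin (r + 1)), X ^ #(descents τ) := by
  rw [← (permSnocEquiv (r + 2)).sum_comp, Fintype.sum_prod_type, sum_mul]
  refine sum_congr rfl fun b _ => ?_
  rw [← (permSnocEquiv (r + 1)).sum_comp, Fintype.sum_prod_type, sum_mul]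
  refine sum_congr rfl fun a _ => ?_
  simp [permSnocEquiv, card_descents_permSnoc_permSnoc_inter, pow_add, mul_sum, mul_comm]

lemma sum_sum_pow_ite_le_castSucc (n : ℕ) :
    ∑ b : Fin (n + 1), ∑ a : Fin n, (X : ℚ[X]) ^ (if b ≤ a.castSucc then 1 else 0)
      = ((n : ℚ) * (n + 1) / 2) • (X + 1) := by
  induction n with
  | zero => simp
  | succ n ih =>
    have row (b : Fin (n + 1)) : ∑ a : Fin (n + 1), (X : ℚ[X]) ^ (if b ≤ a then 1 else 0)
        = ∑ a : Fin n, X ^ (if b ≤ a.castSucc then 1 else 0) + X := by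
      simp [Fin.sum_univ_castSucc, Fin.le_last]
    have last_row : ∑ a : Fin (n + 1),
        (X : ℚ[X]) ^ (if Fin.last (n + 1) ≤ a.castSucc then 1 else 0) = ((n : ℚ) + 1) • 1 := by
      simp [(Fin.castSucc_lt_last _).not_ge, ← Nat.cast_smul_eq_nsmul ℚ]
    rw [Fin.sum_univ_castSucc, last_row]
    simp only [Fin.castSucc_le_castSucc_iff, row, sum_add_distrib, ih]
    rw [sum_const, card_univ, Fintype.card_fin, ← Nat.cast_smul_eq_nsmul ℚ]
    push_cast
    module

theorem sum_N0_eq (n : ℕ) (hn : 2 ≤ n) :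
    ∑ A ∈ Finset.univ.filter (fun A : Finset (Fin n) =>
        (⟨n - 2, by omega⟩ : Fin n) ∉ A),
      (((n + 1).factorial : ℚ) / (Nat.card ↥(Wsub A) : ℚ)) • (X - 1) ^ A.card
      = ((n : ℚ) * (n + 1) / 2) • ((X + 1) * Euler (n - 1)) := by
  obtain ⟨r, rfl⟩ : ∃ r, n = r + 2 := ⟨n - 2, by omega⟩
  have hfilter : univ.filter (fun A : Finset (Fin (r + 2)) => ⟨r + 2 - 2, by omega⟩ ∉ A)
      = ({(Fin.last r).castSucc}ᶜ : Finset (Fin (r + 2))).powerset := by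
    ext A
    simp only [mem_filter, mem_univ, true_and, mem_powerset, subset_compl_singleton]
    rfl
  rw [hfilter, sum_powerset_factorial_div_card_Wsub, sum_pow_card_descents_inter_compl,
    sum_sum_pow_ite_le_castSucc, smul_mul_assoc, show r + 2 - 1 = r + 1 from rfl, Euler]
  simp only [des_eq_card_descents]
end
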